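/- arXiv:1901.08359 — 2 statements merged into one kernel-verified Lean document; each statement's English description precedes it below -/
import Mathlib

section
/- Let ℝ^m carry the Euclidean norm ‖·‖₂, ℝ^n a norm ‖·‖, and D(y,x) := (1/2)‖y − x‖². Let f(x) := (1/2)‖Ax − b‖₂² for A ∈ ℝ^{m×n}, b ∈ ℝ^m, and let X ⊆ ℝ^n be a convex cone such that A(X) is a linear subspace containing more than one point. Then sup{μ ≥ 0 : f is μ-strongly convex relative to (X,D)} = 1/‖(A|X)^{-1}‖². -/
/-!
For least squares the Bregman distance is `D_f(z, x) = ½‖A z - A x‖²`, and `Z_{f,X}(y)` is the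
fiber `X ∩ A⁻¹(A y)`, on which `D_f(·, x)` is constant. So `μ` is admissible iff
`μ · D(X ∩ A⁻¹(A y), x) ≤ ½‖A y - A x‖²` for all `x, y ∈ X`. Since `X + X ⊆ X`, the point
`x + u` with `u ∈ X`, `A u = A y - A x` lies in the fiber, which bounds the left side by
`½ ι(A y - A x)²` with `ι(v) = inf {‖u‖ : u ∈ X, A u = v}`; taking `x ∈ X ∩ ker A` arbitrarily
close to `0` shows the bound is sharp. Hence `μ` is admissible iff `μ ι(v)² ≤ ‖v‖²` on `A(X)`,
by homogeneity iff `μ ι(v)² ≤ 1` on the unit ball of `A(X)`, i.e. iff `μ ‖(A|X)⁻¹‖² ≤ 1`.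
-/

noncomputable section
open scoped RealInnerProductSpace
open Set Filter Topology

lemma Convex.add_mem_of_smul_mem {E : Type*} [AddCommGroup E] [Module ℝ E] {s : Set E}
    (hs : Convex ℝ s) (hsmul : ∀ c : ℝ, 0 < c → ∀ x ∈ s, c • x ∈ s) {x y : E}
    (hx : x ∈ s) (hy : y ∈ s) : x + y ∈ s := by
  have hmid : (1 / 2 : ℝ) • x + (1 / 2 : ℝ) • y ∈ s :=
    hs hx hy (by norm_num) (by norm_num) (by norm_num)
  convert hsmul 2 two_pos _ hmid using 1
  rw [smul_add, smul_smul, smul_smul]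
  norm_num

lemma sInf_setOf_fiber_eq {α β : Type*} {s : Set α} {y : α} (hy : y ∈ s) (π : α → β) (g : β → ℝ) :
    sInf {r | ∃ z, (z ∈ s ∧ π z = π y) ∧ r = g (π z)} = g (π y) := by
  have hset : {r | ∃ z, (z ∈ s ∧ π z = π y) ∧ r = g (π z)} = {g (π y)} := by
    refine Set.eq_singleton_iff_unique_mem.2 ⟨⟨y, ⟨hy, rfl⟩, rfl⟩, ?_⟩
    rintro _ ⟨z, ⟨-, hz⟩, rfl⟩
    rw [hz]
  rw [hset, csInf_singleton]

lemma sSup_setOf_nonneg_mul_le_one {a : ℝ} (ha : 0 ≤ a) :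
    sSup {μ : ℝ | 0 ≤ μ ∧ μ * a ≤ 1} = 1 / a := by
  rcases ha.eq_or_lt with rfl | ha
  · simp only [mul_zero, zero_le_one, and_true, div_zero]
    exact Real.sSup_of_not_bddAbove (not_bddAbove_Ici 0)
  · have hset : {μ : ℝ | 0 ≤ μ ∧ μ * a ≤ 1} = Icc 0 (1 / a) := by
      ext μ
      simp only [mem_ofPred_eq, mem_Icc, le_div_iff₀ ha]
    rw [hset, csSup_Icc (by positivity)]

lemma le_sqrt_one_div_of_mul_sq_le_one {μ r : ℝ} (hμ : 0 < μ) (hr : 0 ≤ r) (h : μ * r ^ 2 ≤ 1) :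
    r ≤ √(1 / μ) :=
  (Real.le_sqrt hr (by positivity)).2 ((le_div_iff₀ hμ).2 (by linarith))

lemma forall_mul_sq_le_one_iff {R : Set ℝ} (hR : ∀ r ∈ R, 0 ≤ r) (hbdd : BddAbove R)
    {μ : ℝ} (hμ : 0 ≤ μ) : (∀ r ∈ R, μ * r ^ 2 ≤ 1) ↔ μ * sSup R ^ 2 ≤ 1 := by
  constructor
  · intro h
    rcases hμ.eq_or_lt with rfl | hμ
    · simp
    have hsup : sSup R ≤ √(1 / μ) := Real.sSup_le
      (fun r hr => le_sqrt_one_div_of_mul_sq_le_one hμ (hR r hr) (h r hr)) (Real.sqrt_nonneg _)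
    have := (Real.le_sqrt (Real.sSup_nonneg hR) (by positivity)).1 hsup
    rw [le_div_iff₀ hμ] at this
    linarith
  · intro h r hr
    calc μ * r ^ 2 ≤ μ * sSup R ^ 2 := by gcongr; exacts [hR r hr, le_csSup hbdd hr]
      _ ≤ 1 := h

/-- When `R` is unbounded both sides are `0`, by the junk values of `sSup` and of `1 / 0`. -/
lemma sSup_setOf_forall_mul_sq_le_one {R : Set ℝ} (hR : ∀ r ∈ R, 0 ≤ r) :
    sSup {μ : ℝ | 0 ≤ μ ∧ ∀ r ∈ R, μ * r ^ 2 ≤ 1} = 1 / sSup R ^ 2 := by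
  by_cases hbdd : BddAbove R
  · have hset : {μ : ℝ | 0 ≤ μ ∧ ∀ r ∈ R, μ * r ^ 2 ≤ 1} = {μ | 0 ≤ μ ∧ μ * sSup R ^ 2 ≤ 1} :=
      Set.ext fun μ => and_congr_right (forall_mul_sq_le_one_iff hR hbdd)
    rw [hset, sSup_setOf_nonneg_mul_le_one (sq_nonneg _)]
  · have hset : {μ : ℝ | 0 ≤ μ ∧ ∀ r ∈ R, μ * r ^ 2 ≤ 1} = {0} := by
      refine Set.eq_singleton_iff_unique_mem.2 ⟨⟨le_rfl, by simp⟩, ?_⟩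
      rintro μ ⟨hμ, h⟩
      by_contra hμ0
      have hμ : 0 < μ := lt_of_le_of_ne hμ (Ne.symm hμ0)
      exact hbdd ⟨√(1 / μ), fun r hr => le_sqrt_one_div_of_mul_sq_le_one hμ (hR r hr) (h r hr)⟩
    rw [hset, csSup_singleton, Real.sSup_of_not_bddAbove hbdd]
    norm_num

section LeastSquares

variable {E F : Type*} [NormedAddCommGroup E] [InnerProductSpace ℝ E] [FiniteDimensional ℝ E]
  [NormedAddCommGroup F] [InnerProductSpace ℝ F] [FiniteDimensional ℝ F]
  (A : E →ₗ[ℝ] F) (b : F)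

lemma hasGradientAt_half_norm_sq_sub (x : E) :
    HasGradientAt (fun t => 1 / 2 * ‖A t - b‖ ^ 2) (LinearMap.adjoint A (A x - b)) x := by
  rw [hasGradientAt_iff_hasFDerivAt]
  refine HasFDerivAt.congr_fderiv
    ((A.toContinuousLinearMap.hasFDerivAt.sub_const b).norm_sq.const_mul (1 / 2)) ?_
  ext h
  simp [LinearMap.adjoint_inner_left]

lemma inner_adjoint_sub_adjoint_sub_eq_norm_sq (y z : E) :
    ⟪LinearMap.adjoint A (A z - b) - LinearMap.adjoint A (A y - b), z - y⟫ = ‖A z - A y‖ ^ 2 := by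
  rw [← map_sub, LinearMap.adjoint_inner_left, map_sub, sub_sub_sub_cancel_right,
    real_inner_self_eq_norm_sq]

lemma half_norm_sq_sub_sub_inner_adjoint (x z : E) :
    1 / 2 * ‖A z - b‖ ^ 2 - 1 / 2 * ‖A x - b‖ ^ 2 - ⟪LinearMap.adjoint A (A x - b), z - x⟫
      = 1 / 2 * ‖A z - A x‖ ^ 2 := by
  rw [LinearMap.adjoint_inner_left, map_sub, show A z - b = (A z - A x) + (A x - b) by abel,
    norm_add_sq_real, real_inner_comm]
  ring

end LeastSquares

section Cone

variable {E F : Type*} [AddCommGroup E] [Module ℝ E] [NormedAddCommGroup F] [NormedSpace ℝ F]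
  (p : Seminorm ℝ E) (A : E →ₗ[ℝ] F) (C : ConvexCone ℝ E)

/-- `‖(A|C)⁻¹‖` is the supremum of `preimageNorm p A C` over the unit ball of `A(C)`. -/
def preimageNorm (v : F) : ℝ := sInf {s | ∃ x ∈ C, A x = v ∧ s = p x}

/-- `D(Z_{f,C}(y), x)` for `D = p² / 2`: for least squares `Z_{f,C}(y) = C ∩ A⁻¹(A y)`. -/
def fiberDist (x y : E) : ℝ := sInf {r | ∃ z, (z ∈ C ∧ A z = A y) ∧ r = 1 / 2 * p (z - x) ^ 2}

variable {p A C}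

lemma preimageNorm_nonneg (v : F) : 0 ≤ preimageNorm p A C v :=
  Real.sInf_nonneg (by rintro _ ⟨x, -, -, rfl⟩; exact apply_nonneg p x)

lemma preimageNorm_le {x : E} (hx : x ∈ C) : preimageNorm p A C (A x) ≤ p x :=
  csInf_le ⟨0, by rintro _ ⟨y, -, -, rfl⟩; exact apply_nonneg p y⟩ ⟨x, hx, rfl, rfl⟩

lemma preimageNorm_smul {c : ℝ} (hc : 0 < c) (v : F) :
    preimageNorm p A C (c • v) = c * preimageNorm p A C v := by
  rw [preimageNorm, preimageNorm, ← smul_eq_mul, ← Real.sInf_smul_of_nonneg hc.le]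
  congr 1
  ext s
  simp only [mem_ofPred_eq, Set.mem_smul_set]
  constructor
  · rintro ⟨x, hx, hxv, rfl⟩
    refine ⟨p (c⁻¹ • x), ⟨c⁻¹ • x, C.smul_mem (inv_pos.2 hc) hx, ?_, rfl⟩, ?_⟩
    · rw [map_smul, hxv, inv_smul_smul₀ hc.ne']
    · rw [map_smul_eq_mul, smul_eq_mul, ← mul_assoc, Real.norm_eq_abs, abs_inv, abs_of_pos hc,
        mul_inv_cancel₀ hc.ne', one_mul]
  · rintro ⟨_, ⟨x, hx, rfl, rfl⟩, rfl⟩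
    exact ⟨c • x, C.smul_mem hc hx, map_smul A c x, by
      rw [map_smul_eq_mul, Real.norm_eq_abs, abs_of_pos hc, smul_eq_mul]⟩

lemma preimageNorm_zero : preimageNorm p A C 0 = 0 := by
  have h := preimageNorm_smul (p := p) (A := A) (C := C) two_pos 0
  rw [smul_zero] at h
  linarith

lemma bddBelow_fiberDist_set (x y : E) :
    BddBelow {r | ∃ z, (z ∈ C ∧ A z = A y) ∧ r = 1 / 2 * p (z - x) ^ 2} :=
  ⟨0, by rintro _ ⟨z, -, rfl⟩; positivity⟩

lemma fiberDist_le {x y : E} (hx : x ∈ C) (hv : A y - A x ∈ A '' C) :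
    fiberDist p A C x y ≤ 1 / 2 * preimageNorm p A C (A y - A x) ^ 2 := by
  obtain ⟨u₀, hu₀, hAu₀⟩ := hv
  have hsqrt : √(2 * fiberDist p A C x y) ≤ preimageNorm p A C (A y - A x) := by
    refine le_csInf ⟨p u₀, u₀, hu₀, hAu₀, rfl⟩ ?_
    rintro _ ⟨u, hu, hAu, rfl⟩
    have hxu : fiberDist p A C x y ≤ 1 / 2 * p u ^ 2 :=
      csInf_le (bddBelow_fiberDist_set x y) ⟨x + u, ⟨C.add_mem hx hu, by rw [map_add, hAu]; abel⟩,
        by rw [add_sub_cancel_left]⟩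
    rw [Real.sqrt_le_left (apply_nonneg p u)]
    linarith
  linarith [(Real.sqrt_le_iff.1 hsqrt).2]

lemma half_sq_sub_le_fiberDist {x y : E} (hy : y ∈ C) (hx : p x ≤ preimageNorm p A C (A y)) :
    1 / 2 * (preimageNorm p A C (A y) - p x) ^ 2 ≤ fiberDist p A C x y := by
  refine le_csInf ⟨_, y, ⟨hy, rfl⟩, rfl⟩ ?_
  rintro _ ⟨z, ⟨hz, hAz⟩, rfl⟩
  have hz : preimageNorm p A C (A y) ≤ p z := hAz ▸ preimageNorm_le hz
  have htri : p z ≤ p (z - x) + p x := by simpa using map_add_le_add p (z - x) x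
  have := pow_le_pow_left₀ (sub_nonneg.2 hx) (show _ ≤ p (z - x) by linarith) 2
  linarith

lemma exists_mem_ker_seminorm_le (h0 : (0 : F) ∈ A '' C) {δ : ℝ} (hδ : 0 < δ) :
    ∃ x ∈ C, A x = 0 ∧ p x ≤ δ := by
  obtain ⟨x₀, hx₀, hAx₀⟩ := h0
  have hp := apply_nonneg p x₀
  refine ⟨(δ / (p x₀ + 1)) • x₀, C.smul_mem (by positivity) hx₀,
    by rw [map_smul, hAx₀, smul_zero], ?_⟩
  rw [map_smul_eq_mul, Real.norm_eq_abs, abs_of_pos (by positivity), div_mul_eq_mul_div,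
    div_le_iff₀ (by positivity)]
  nlinarith

lemma mul_preimageNorm_sq_le (h0 : (0 : F) ∈ A '' C) {μ : ℝ} (hμ : 0 ≤ μ)
    (h : ∀ x ∈ C, ∀ y ∈ C, μ * fiberDist p A C x y ≤ 1 / 2 * ‖A y - A x‖ ^ 2) {y : E} (hy : y ∈ C) :
    μ * preimageNorm p A C (A y) ^ 2 ≤ ‖A y‖ ^ 2 := by
  rcases (preimageNorm_nonneg (p := p) (A := A) (C := C) (A y)).eq_or_lt with hι | hι
  · rw [← hι, zero_pow two_ne_zero, mul_zero]; positivity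
  set ι := preimageNorm p A C (A y)
  have hlim : Tendsto (fun δ => μ * (ι - δ) ^ 2) (𝓝[>] 0) (𝓝 (μ * ι ^ 2)) := by
    have hcont : Continuous (fun δ : ℝ => μ * (ι - δ) ^ 2) := by fun_prop
    simpa using (hcont.tendsto 0).mono_left nhdsWithin_le_nhds
  refine le_of_tendsto hlim ?_
  filter_upwards [Ioo_mem_nhdsGT hι] with δ hδ
  obtain ⟨x, hx, hAx, hpx⟩ := exists_mem_ker_seminorm_le h0 hδ.1
  have hlow := half_sq_sub_le_fiberDist hy (hpx.trans hδ.2.le)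
  have hμxy := h x hx y hy
  rw [hAx, sub_zero] at hμxy
  calc μ * (ι - δ) ^ 2 ≤ μ * (ι - p x) ^ 2 := by gcongr; linarith [hδ.2]
    _ ≤ μ * (2 * fiberDist p A C x y) := by gcongr; linarith
    _ ≤ ‖A y‖ ^ 2 := by linarith

lemma forall_mul_fiberDist_le_iff (W : Submodule ℝ F) (hW : A '' C = W) {μ : ℝ} (hμ : 0 ≤ μ) :
    (∀ x ∈ C, ∀ y ∈ C, μ * fiberDist p A C x y ≤ 1 / 2 * ‖A y - A x‖ ^ 2) ↔
      ∀ v ∈ A '' C, μ * preimageNorm p A C v ^ 2 ≤ ‖v‖ ^ 2 := by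
  constructor
  · rintro h _ ⟨y, hy, rfl⟩
    exact mul_preimageNorm_sq_le (hW ▸ W.zero_mem) hμ h hy
  · intro h x hx y hy
    have hmem : ∀ z ∈ C, A z ∈ W := fun z hz => by
      rw [← SetLike.mem_coe, ← hW]; exact mem_image_of_mem A hz
    have hv : A y - A x ∈ A '' C := hW ▸ W.sub_mem (hmem y hy) (hmem x hx)
    calc μ * fiberDist p A C x y ≤ μ * (1 / 2 * preimageNorm p A C (A y - A x) ^ 2) := by
          gcongr; exact fiberDist_le hx hv
      _ ≤ 1 / 2 * ‖A y - A x‖ ^ 2 := by linarith [h _ hv]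

lemma forall_mul_preimageNorm_sq_le_iff {μ : ℝ} :
    (∀ v ∈ A '' C, μ * preimageNorm p A C v ^ 2 ≤ ‖v‖ ^ 2) ↔
      ∀ r ∈ {r | ∃ v ∈ A '' C, ‖v‖ ≤ 1 ∧ r = preimageNorm p A C v}, μ * r ^ 2 ≤ 1 := by
  constructor
  · rintro h _ ⟨v, hv, hv1, rfl⟩
    exact (h v hv).trans (pow_le_one₀ (norm_nonneg v) hv1)
  · intro h v hv
    rcases eq_or_ne v 0 with rfl | hv0
    · simp [preimageNorm_zero]
    have hnorm : 0 < ‖v‖ := norm_pos_iff.2 hv0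
    have hw : ‖v‖⁻¹ • v ∈ A '' C := by
      rw [← ConvexCone.coe_map] at hv ⊢
      exact (C.map A).smul_mem (inv_pos.2 hnorm) hv
    have hwv : preimageNorm p A C v = ‖v‖ * preimageNorm p A C (‖v‖⁻¹ • v) := by
      rw [← preimageNorm_smul hnorm, smul_inv_smul₀ hnorm.ne']
    have hw1 := h _ ⟨_, hw, by rw [norm_smul, norm_inv, norm_norm, inv_mul_cancel₀ hnorm.ne'], rfl⟩
    rw [hwv, mul_pow, mul_left_comm]
    nlinarith [sq_nonneg ‖v‖]

end Cone

theorem relative_strong_convexity_constant_of_least_squares_conic_general {m n : ℕ}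
    (nn : EuclideanSpace ℝ (Fin n) → ℝ)
    (hnn_add : ∀ x y, nn (x + y) ≤ nn x + nn y)
    (hnn_smul : ∀ (c : ℝ) (x : EuclideanSpace ℝ (Fin n)), nn (c • x) = |c| * nn x)
    (A : EuclideanSpace ℝ (Fin n) →ₗ[ℝ] EuclideanSpace ℝ (Fin m))
    (b : EuclideanSpace ℝ (Fin m))
    (f : EuclideanSpace ℝ (Fin n) → ℝ)
    (hf : ∀ x, f x = (1 / 2) * ‖A x - b‖ ^ 2)
    (f' : EuclideanSpace ℝ (Fin n) → EuclideanSpace ℝ (Fin n))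
    (hf' : ∀ x, HasGradientAt f (f' x) x)
    (D : EuclideanSpace ℝ (Fin n) → EuclideanSpace ℝ (Fin n) → ℝ)
    (hD : ∀ y x, D y x = (1 / 2) * (nn (y - x)) ^ 2)
    (X : Set (EuclideanSpace ℝ (Fin n)))
    (hXconv : Convex ℝ X)
    (hXcone : ∀ (c : ℝ), 0 < c → ∀ x ∈ X, c • x ∈ X)
    (hAX : ∃ W : Submodule ℝ (EuclideanSpace ℝ (Fin m)), A '' X = (W : Set (EuclideanSpace ℝ (Fin m)))) :
    sSup {μ : ℝ | 0 ≤ μ ∧ ∀ x ∈ X, ∀ y ∈ X,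
        μ * sInf {r | ∃ z, (z ∈ X ∧ f z = f y ∧ ⟪f' z - f' y, z - y⟫ = 0) ∧ r = D z x}
          ≤ sInf {r | ∃ z, (z ∈ X ∧ f z = f y ∧ ⟪f' z - f' y, z - y⟫ = 0) ∧
              r = f z - f x - ⟪f' x, z - x⟫}}
      = 1 / (sSup {r : ℝ | ∃ v ∈ A '' X, ‖v‖ ≤ 1 ∧
          r = sInf {s | ∃ x ∈ X, A x = v ∧ s = nn x}}) ^ 2 := by
  obtain ⟨W, hW⟩ := hAX
  let p : Seminorm ℝ (EuclideanSpace ℝ (Fin n)) := Seminorm.of nn hnn_add hnn_smul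
  let C : ConvexCone ℝ (EuclideanSpace ℝ (Fin n)) :=
    ⟨X, fun c hc x hx => hXcone c hc x hx, fun _ hx _ hy => hXconv.add_mem_of_smul_mem hXcone hx hy⟩
  have hgrad : ∀ x, f' x = LinearMap.adjoint A (A x - b) := fun x =>
    (hf' x).unique (by rw [show f = _ from funext hf]; exact hasGradientAt_half_norm_sq_sub A b x)
  have hZ : ∀ y z, (f z = f y ∧ ⟪f' z - f' y, z - y⟫ = 0) ↔ A z = A y := fun y z => by
    rw [hgrad, hgrad, inner_adjoint_sub_adjoint_sub_eq_norm_sq, sq_eq_zero_iff, norm_eq_zero,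
      sub_eq_zero]
    exact and_iff_right_of_imp fun h => by rw [hf, hf, h]
  have hBregman : ∀ x z, f z - f x - ⟪f' x, z - x⟫ = 1 / 2 * ‖A z - A x‖ ^ 2 := fun x z => by
    rw [hf, hf, hgrad, half_norm_sq_sub_sub_inner_adjoint]
  have hM : {μ : ℝ | 0 ≤ μ ∧ ∀ x ∈ X, ∀ y ∈ X,
        μ * sInf {r | ∃ z, (z ∈ X ∧ f z = f y ∧ ⟪f' z - f' y, z - y⟫ = 0) ∧ r = D z x}
          ≤ sInf {r | ∃ z, (z ∈ X ∧ f z = f y ∧ ⟪f' z - f' y, z - y⟫ = 0) ∧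
              r = f z - f x - ⟪f' x, z - x⟫}}
      = {μ : ℝ | 0 ≤ μ ∧ ∀ x ∈ C, ∀ y ∈ C, μ * fiberDist p A C x y ≤ 1 / 2 * ‖A y - A x‖ ^ 2} := by
    refine Set.ext fun μ => and_congr_right fun _ =>
      forall₂_congr fun x _ => forall₂_congr fun y hy => ?_
    simp only [hZ, hD, hBregman]
    rw [sInf_setOf_fiber_eq hy A (fun w => 1 / 2 * ‖w - A x‖ ^ 2)]
    rfl
  rw [hM, Set.ext fun μ => and_congr_right fun hμ =>
    (forall_mul_fiberDist_le_iff (C := C) W hW hμ).trans forall_mul_preimageNorm_sq_le_iff]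
  exact sSup_setOf_forall_mul_sq_le_one fun _ ⟨v, _, _, hr⟩ => hr ▸ preimageNorm_nonneg v

/-- for f(x) = (1/2)‖Ax − b‖₂², X a convex cone with A(X) a linear subspace
containing more than one point, and D(y,x) = (1/2)‖y−x‖², the relative strong convexity
constant of f relative to (X,D) equals 1/‖(A|X)⁻¹‖². -/
theorem relative_strong_convexity_constant_of_least_squares_conic {m n : ℕ}
    (nn : EuclideanSpace ℝ (Fin n) → ℝ)
    (hnn0 : ∀ x, nn x = 0 ↔ x = 0)
    (hnn_add : ∀ x y, nn (x + y) ≤ nn x + nn y)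
    (hnn_smul : ∀ (c : ℝ) (x : EuclideanSpace ℝ (Fin n)), nn (c • x) = |c| * nn x)
    (A : EuclideanSpace ℝ (Fin n) →ₗ[ℝ] EuclideanSpace ℝ (Fin m))
    (b : EuclideanSpace ℝ (Fin m))
    (f : EuclideanSpace ℝ (Fin n) → ℝ)
    (hf : ∀ x, f x = (1 / 2) * ‖A x - b‖ ^ 2)
    (f' : EuclideanSpace ℝ (Fin n) → EuclideanSpace ℝ (Fin n))
    (hf' : ∀ x, HasGradientAt f (f' x) x)
    (D : EuclideanSpace ℝ (Fin n) → EuclideanSpace ℝ (Fin n) → ℝ)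
    (hD : ∀ y x, D y x = (1 / 2) * (nn (y - x)) ^ 2)
    (X : Set (EuclideanSpace ℝ (Fin n)))
    (hXconv : Convex ℝ X)
    (hXcone : ∀ (c : ℝ), 0 < c → ∀ x ∈ X, c • x ∈ X)
    (hAX : ∃ W : Submodule ℝ (EuclideanSpace ℝ (Fin m)), A '' X = (W : Set (EuclideanSpace ℝ (Fin m))))
    (hAX2 : (A '' X).Nontrivial) :
    sSup {μ : ℝ | 0 ≤ μ ∧ ∀ x ∈ X, ∀ y ∈ X,
        μ * sInf {r | ∃ z, (z ∈ X ∧ f z = f y ∧ ⟪f' z - f' y, z - y⟫ = 0) ∧ r = D z x}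
          ≤ sInf {r | ∃ z, (z ∈ X ∧ f z = f y ∧ ⟪f' z - f' y, z - y⟫ = 0) ∧
              r = f z - f x - ⟪f' x, z - x⟫}}
      = 1 / (sSup {r : ℝ | ∃ v ∈ A '' X, ‖v‖ ≤ 1 ∧
          r = sInf {s | ∃ x ∈ X, A x = v ∧ s = nn x}}) ^ 2 :=
  relative_strong_convexity_constant_of_least_squares_conic_general nn hnn_add hnn_smul A b f hf f'
    hf' D hD X hXconv hXcone hAX
end
end

section
/- Let f : ℝ^n → ℝ be convex and differentiable, X ⊆ ℝ^n convex, and h : ℝ^n → ℝ convex and differentiable with Bregman distance D_h. Suppose f attains its minimum f* on X with nonempty solution set X*, and for each x ∈ X the point x̄ := argmin_{y∈X*} D_h(y,x) exists and is unique. Suppose L > 0 satisfies D_f(y,x) ≤ L·D_h(y,x) for all x,y ∈ X, and μ > 0 satisfies f(x) − f* ≥ μ·D_h(x̄,x) for all x ∈ X. Let x_0 ∈ X and for each k ≥ 0 let x_{k+1} minimize y ↦ ⟨∇f(x_k), y⟩ + L·D_h(y,x_k) over y ∈ X. Then with K := ⌈2L/μ⌉, the iterates satisfy D_h(X*, x_{k+K})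 ≤ (1/2)·D_h(X*, x_k) for all k ≥ 0, where D_h(X*, x) := inf_{y∈X*} D_h(y,x). -/
/-! The mirror step satisfies the three-point inequality, which together with relative smoothness
and the gradient inequality for `f` gives `f x_{k+1} ≤ f w + L D_h(w, x_k) - L D_h(w, x_{k+1})`
for every `w ∈ X`. Taking `w = x̄_k`, and using relative growth at `x_{k+1}` and minimality of
`x̄_{k+1}`, yields the contraction `(L + μ) D_h(X*, x_{k+1}) ≤ L D_h(X*, x_k)`. After
`K ≥ 2L/μ` steps the factor `(1 + μ/L)^{-K}` is at most `1/2` by Bernoulli's inequality. -/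

noncomputable section
open scoped RealInnerProductSpace
open Set

theorem ConvexOn.fderiv_sub_le {E : Type*} [NormedAddCommGroup E] [NormedSpace ℝ E]
    {s : Set E} {φ : E → ℝ} {φ' : E →L[ℝ] ℝ} {x y : E}
    (hφ : ConvexOn ℝ s φ) (hx : x ∈ s) (hy : y ∈ s) (hd : HasFDerivAt φ φ' x) :
    φ' (y - x) ≤ φ y - φ x := by
  let g : ℝ →ᵃ[ℝ] E := AffineMap.lineMap x y
  have hg : HasDerivAt (φ ∘ g) (φ' (y - x)) 0 := by
    have hd0 : HasFDerivAt φ φ' (g 0) := by simpa [g] using hd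
    exact hd0.comp_hasDerivAt (0 : ℝ) AffineMap.hasDerivAt_lineMap
  simpa [g, slope_def_field] using
    (hφ.comp_affineMap g).le_slope_of_hasDerivAt (x := 0) (y := 1) (by simpa [g]) (by simpa [g])
      one_pos hg

theorem IsMinOn.fderiv_sub_nonneg {E : Type*} [NormedAddCommGroup E] [NormedSpace ℝ E]
    {s : Set E} {ψ : E → ℝ} {ψ' : E →L[ℝ] ℝ} {b y : E}
    (hψ : IsMinOn ψ s b) (hs : Convex ℝ s) (hb : b ∈ s) (hy : y ∈ s) (hd : HasFDerivAt ψ ψ' b) :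
    0 ≤ ψ' (y - b) :=
  hψ.localize.hasFDerivWithinAt_nonneg hd.hasFDerivWithinAt
    (sub_mem_posTangentConeAt_of_segment_subset (hs.segment_subset hb hy))

section Bregman

variable {F : Type*} [NormedAddCommGroup F] [InnerProductSpace ℝ F]

theorem ConvexOn.inner_gradient_sub_le [CompleteSpace F] {s : Set F} {φ : F → ℝ} {g x y : F}
    (hφ : ConvexOn ℝ s φ) (hx : x ∈ s) (hy : y ∈ s) (hd : HasGradientAt φ g x) :
    ⟪g, y - x⟫ ≤ φ y - φ x := by
  simpa using hφ.fderiv_sub_le hx hy hd.hasFDerivAt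

def bregman (φ : F → ℝ) (φ' : F → F) (y x : F) : ℝ := φ y - φ x - ⟪φ' x, y - x⟫

theorem bregman_nonneg [CompleteSpace F] {s : Set F} {φ : F → ℝ} {φ' : F → F} {x y : F}
    (hφ : ConvexOn ℝ s φ) (hx : x ∈ s) (hy : y ∈ s) (hd : HasGradientAt φ (φ' x) x) :
    0 ≤ bregman φ φ' y x :=
  sub_nonneg.2 (hφ.inner_gradient_sub_le hx hy hd)

theorem bregman_three_point (φ : F → ℝ) (φ' : F → F) (a b y : F) :
    bregman φ φ' y a - bregman φ φ' b a - bregman φ φ' y b = ⟪φ' b - φ' a, y - b⟫ := by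
  have : y - a = (y - b) + (b - a) := by abel
  simp only [bregman, this, inner_add_right, inner_sub_left]
  ring

theorem hasFDerivAt_bregman_left {φ : F → ℝ} {φ' : F → F} {φ'' : F →L[ℝ] ℝ} {a b : F}
    (hd : HasFDerivAt φ φ'' b) :
    HasFDerivAt (fun z ↦ bregman φ φ' z a) (φ'' - innerSL ℝ (φ' a)) b := by
  have := (hd.sub_const (φ a)).sub (((innerSL ℝ (φ' a)).hasFDerivAt).sub_const ⟪φ' a, a⟫)
  refine this.congr_of_eventuallyEq (.of_forall fun z ↦ ?_)
  simp only [bregman, Pi.sub_apply, innerSL_apply_apply, inner_sub_right]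

theorem IsMinOn.mirror_step_three_point [CompleteSpace F] {s : Set F} {φ : F → ℝ} {φ' : F → F}
    {c a b y : F} {L : ℝ} (hb : IsMinOn (fun z ↦ ⟪c, z⟫ + L * bregman φ φ' z a) s b)
    (hs : Convex ℝ s) (hbs : b ∈ s) (hy : y ∈ s) (hd : HasGradientAt φ (φ' b) b) :
    ⟪c, b⟫ + L * bregman φ φ' b a + L * bregman φ φ' y b ≤ ⟪c, y⟫ + L * bregman φ φ' y a := by
  have hfirst := hb.fderiv_sub_nonneg hs hbs hy
    (((innerSL ℝ c).hasFDerivAt).add ((hasFDerivAt_bregman_left hd.hasFDerivAt).const_mul L))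
  have h3 := bregman_three_point φ φ' a b y
  simp only [add_apply, smul_apply, sub_apply, innerSL_apply_apply,
    InnerProductSpace.toDual_apply_apply, smul_eq_mul] at hfirst
  simp only [inner_sub_left, inner_sub_right] at h3 hfirst
  linear_combination hfirst - L * h3

theorem IsMinOn.mirror_step_descent [CompleteSpace F] {s : Set F} {f h : F → ℝ} {f' h' : F → F}
    {a b w : F} {L : ℝ} (hb : IsMinOn (fun z ↦ ⟪f' a, z⟫ + L * bregman h h' z a) s b)
    (hs : Convex ℝ s) (hbs : b ∈ s) (hws : w ∈ s) (hhd : HasGradientAt h (h' b) b)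
    (hf : ConvexOn ℝ s f) (has : a ∈ s) (hfd : HasGradientAt f (f' a) a)
    (hsmooth : bregman f f' b a ≤ L * bregman h h' b a) :
    f b ≤ f w + L * bregman h h' w a - L * bregman h h' w b := by
  have hstep := hb.mirror_step_three_point hs hbs hws hhd
  have hgrad := hf.inner_gradient_sub_le has hws hfd
  have hfba : bregman f f' b a = f b - f a - ⟪f' a, b - a⟫ := rfl
  simp only [inner_sub_right] at hstep hgrad hfba
  linarith

end Bregman

theorem pow_mul_le_of_forall_mul_succ_le {q : ℝ} {d : ℕ → ℝ} (hq : 0 ≤ q)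
    (h : ∀ m, q * d (m + 1) ≤ d m) (k j : ℕ) : q ^ j * d (k + j) ≤ d k := by
  induction j with
  | zero => simp
  | succ j ih =>
    calc q ^ (j + 1) * d (k + (j + 1))
        = q ^ j * (q * d (k + j + 1)) := by rw [pow_succ, mul_assoc, ← add_assoc]
      _ ≤ q ^ j * d (k + j) := by gcongr; exact h _
      _ ≤ d k := ih

theorem le_half_of_forall_mul_succ_le {L μ : ℝ} {d : ℕ → ℝ} (hL : 0 < L) (hμ : 0 < μ)
    (hd : ∀ m, 0 ≤ d m) (h : ∀ m, (L + μ) * d (m + 1) ≤ L * d m) {K : ℕ}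
    (hK : 2 * L / μ ≤ K) (k : ℕ) : d (k + K) ≤ 1 / 2 * d k := by
  have hq : ∀ m, (1 + μ / L) * d (m + 1) ≤ d m := fun m ↦ by
    rw [one_add_div hL.ne', div_mul_eq_mul_div, div_le_iff₀ hL, mul_comm (d m)]
    exact h m
  have hKμ : 2 ≤ K * (μ / L) := by
    rw [div_le_iff₀ hμ] at hK
    rw [mul_div_assoc', le_div_iff₀ hL]
    linarith
  have hpow : 2 ≤ (1 + μ / L) ^ K := by
    linarith [one_add_mul_le_pow (a := μ / L) (by linarith [div_pos hμ hL]) K]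
  linarith [pow_mul_le_of_forall_mul_succ_le (by positivity) hq k K,
    mul_le_mul_of_nonneg_right hpow (hd (k + K))]

theorem mirror_descent_halving_under_functional_growth_general {n : ℕ}
    (f : EuclideanSpace ℝ (Fin n) → ℝ)
    (f' : EuclideanSpace ℝ (Fin n) → EuclideanSpace ℝ (Fin n))
    (hfconv : ConvexOn ℝ Set.univ f)
    (hfdiff : ∀ x, HasGradientAt f (f' x) x)
    (X : Set (EuclideanSpace ℝ (Fin n))) (hX : Convex ℝ X)
    (h : EuclideanSpace ℝ (Fin n) → ℝ)
    (h' : EuclideanSpace ℝ (Fin n) → EuclideanSpace ℝ (Fin n))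
    (hhconv : ConvexOn ℝ Set.univ h)
    (hhdiff : ∀ x, HasGradientAt h (h' x) x)
    (Dh : EuclideanSpace ℝ (Fin n) → EuclideanSpace ℝ (Fin n) → ℝ)
    (hDh : ∀ y x, Dh y x = h y - h x - ⟪h' x, y - x⟫)
    (fstar : ℝ)
    (Xstar : Set (EuclideanSpace ℝ (Fin n)))
    (hXstar : Xstar = {x | x ∈ X ∧ f x = fstar})
    (xbar : EuclideanSpace ℝ (Fin n) → EuclideanSpace ℝ (Fin n))
    (hbar : ∀ x ∈ X, xbar x ∈ Xstar ∧ ∀ y ∈ Xstar, Dh (xbar x) x ≤ Dh y x)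
    (L : ℝ) (hL : 0 < L)
    (hsmooth : ∀ x ∈ X, ∀ y ∈ X, f y - f x - ⟪f' x, y - x⟫ ≤ L * Dh y x)
    (μ : ℝ) (hμ : 0 < μ)
    (hgrowth : ∀ x ∈ X, μ * Dh (xbar x) x ≤ f x - fstar)
    (x : ℕ → EuclideanSpace ℝ (Fin n))
    (hx0 : x 0 ∈ X)
    (hiter : ∀ k : ℕ, x (k + 1) ∈ X ∧ ∀ y ∈ X,
      ⟪f' (x k), x (k + 1)⟫ + L * Dh (x (k + 1)) (x k) ≤ ⟪f' (x k), y⟫ + L * Dh y (x k))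
    (K : ℕ) (hK : K = ⌈2 * L / μ⌉₊) :
    ∀ k : ℕ, sInf {r | ∃ y ∈ Xstar, r = Dh y (x (k + K))}
      ≤ (1 / 2) * sInf {r | ∃ y ∈ Xstar, r = Dh y (x k)} := by
  obtain rfl : Dh = bregman h h' := funext₂ hDh
  have hstar : ∀ z ∈ Xstar, z ∈ X ∧ f z = fstar := fun z hz ↦ by rwa [hXstar] at hz
  have hxX : ∀ m, x m ∈ X := fun m ↦ m.casesOn hx0 fun m ↦ (hiter m).1
  have hdist : ∀ m, sInf {r | ∃ y ∈ Xstar, r = bregman h h' y (x m)} =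
      bregman h h' (xbar (x m)) (x m) := fun m ↦
    IsLeast.csInf_eq ⟨⟨_, (hbar _ (hxX m)).1, rfl⟩, by
      rintro r ⟨y, hy, rfl⟩
      exact (hbar _ (hxX m)).2 y hy⟩
  have hcontract : ∀ m, (L + μ) * bregman h h' (xbar (x (m + 1))) (x (m + 1)) ≤
      L * bregman h h' (xbar (x m)) (x m) := fun m ↦ by
    obtain ⟨hw, -⟩ := hbar _ (hxX m)
    obtain ⟨hwX, hfw⟩ := hstar _ hw
    have hdesc := (isMinOn_iff.2 (hiter m).2).mirror_step_descent hX (hxX (m + 1)) hwX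
      (hhdiff _) (hfconv.subset (subset_univ X) hX) (hxX m) (hfdiff _)
      (hsmooth _ (hxX m) _ (hxX (m + 1)))
    have hgrow := hgrowth _ (hxX (m + 1))
    have hclosest := mul_le_mul_of_nonneg_left ((hbar _ (hxX (m + 1))).2 _ hw) hL.le
    linarith
  intro k
  rw [hdist, hdist]
  exact le_half_of_forall_mul_succ_le (d := fun m ↦ bregman h h' (xbar (x m)) (x m)) hL hμ
    (fun m ↦ bregman_nonneg hhconv (mem_univ _) (mem_univ _) (hhdiff _)) hcontract
    (hK ▸ Nat.le_ceil _) k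

/-- Proposition prop.lin.mirror.2: halving of the Bregman distance to the
optimal set every K = ⌈2L/μ⌉ iterations of mirror descent under relative functional growth. -/
theorem mirror_descent_halving_under_functional_growth {n : ℕ}
    (f : EuclideanSpace ℝ (Fin n) → ℝ)
    (f' : EuclideanSpace ℝ (Fin n) → EuclideanSpace ℝ (Fin n))
    (hfconv : ConvexOn ℝ Set.univ f)
    (hfdiff : ∀ x, HasGradientAt f (f' x) x)
    (X : Set (EuclideanSpace ℝ (Fin n))) (hX : Convex ℝ X)
    (h : EuclideanSpace ℝ (Fin n) → ℝ)
    (h' : EuclideanSpace ℝ (Fin n) → EuclideanSpace ℝ (Fin n))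
    (hhconv : ConvexOn ℝ Set.univ h)
    (hhdiff : ∀ x, HasGradientAt h (h' x) x)
    (Dh : EuclideanSpace ℝ (Fin n) → EuclideanSpace ℝ (Fin n) → ℝ)
    (hDh : ∀ y x, Dh y x = h y - h x - ⟪h' x, y - x⟫)
    (fstar : ℝ)
    (hmin : ∃ z ∈ X, f z = fstar ∧ ∀ y ∈ X, fstar ≤ f y)
    (Xstar : Set (EuclideanSpace ℝ (Fin n)))
    (hXstar : Xstar = {x | x ∈ X ∧ f x = fstar})
    (xbar : EuclideanSpace ℝ (Fin n) → EuclideanSpace ℝ (Fin n))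
    (hbar : ∀ x ∈ X, xbar x ∈ Xstar ∧ ∀ y ∈ Xstar, Dh (xbar x) x ≤ Dh y x)
    (hbar_unique : ∀ x ∈ X, ∀ y ∈ Xstar, (∀ z ∈ Xstar, Dh y x ≤ Dh z x) → y = xbar x)
    (L : ℝ) (hL : 0 < L)
    (hsmooth : ∀ x ∈ X, ∀ y ∈ X, f y - f x - ⟪f' x, y - x⟫ ≤ L * Dh y x)
    (μ : ℝ) (hμ : 0 < μ)
    (hgrowth : ∀ x ∈ X, μ * Dh (xbar x) x ≤ f x - fstar)
    (x : ℕ → EuclideanSpace ℝ (Fin n))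
    (hx0 : x 0 ∈ X)
    (hiter : ∀ k : ℕ, x (k + 1) ∈ X ∧ ∀ y ∈ X,
      ⟪f' (x k), x (k + 1)⟫ + L * Dh (x (k + 1)) (x k) ≤ ⟪f' (x k), y⟫ + L * Dh y (x k))
    (K : ℕ) (hK : K = ⌈2 * L / μ⌉₊) :
    ∀ k : ℕ, sInf {r | ∃ y ∈ Xstar, r = Dh y (x (k + K))}
      ≤ (1 / 2) * sInf {r | ∃ y ∈ Xstar, r = Dh y (x k)} :=
  mirror_descent_halving_under_functional_growth_general f f' hfconv hfdiff X hX h h' hhconv hhdiff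
    Dh hDh fstar Xstar hXstar xbar hbar L hL hsmooth μ hμ hgrowth x hx0 hiter K hK
end
end
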